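/- arXiv:1606.08181 — 2 statements merged into one kernel-verified Lean document; each statement's English description precedes it below -/
import Mathlib

section
/- Let Δ be a two-dimensional lattice polygon and let P, Q be distinct lattice points of Δ. If for every integer q ≥ 1 one has ((qΔ)^{(1)} − P) ∩ ((qΔ)^{(1)} − Q) ∩ ℤ² ⊆ ((q−1)Δ)^{(1)}, then for every integer q ≥ 1 one has (qΔ − P) ∩ (qΔ − Q) ∩ ℤ² ⊆ (q−1)Δ. -/
open scoped Pointwise

noncomputable section

/-- The embedding of the lattice `ℤ²` into `ℝ²`. -/
def ι2 (p : ℤ × ℤ) : ℝ × ℝ := ((p.1 : ℝ), (p.2 : ℝ))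

/-- A lattice polygon: the convex hull of a finite set of lattice points. -/
def IsLatticePolygon (Δ : Set (ℝ × ℝ)) : Prop :=
  ∃ S : Finset (ℤ × ℤ), Δ = convexHull ℝ (ι2 '' ↑S)

/-- The translate `A − P` of a set. -/
def transl (A : Set (ℝ × ℝ)) (P : ℝ × ℝ) : Set (ℝ × ℝ) := (fun x => x - P) '' A

/-- `Δ^{(1)}`: the convex hull of the lattice points in the topological interior of `Δ`. -/
def interiorHull (A : Set (ℝ × ℝ)) : Set (ℝ × ℝ) := convexHull ℝ (interior A ∩ Set.range ι2)

/-! Fix a lattice point `w` in the interior of some dilate `mΔ`, and a lattice point `v` with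
`v + P, v + Q ∈ qΔ`. Since `qΔ + int (cΔ) ⊆ int ((q + c)Δ)` and a lattice point of `int (cΔ)` lies
in `(cΔ)⁽¹⁾ ⊆ int (cΔ)`, the hypothesis turns `kv + w ∈ int ((k(q - 1) + m)Δ)` into
`(k + 1)v + w ∈ int (((k + 1)(q - 1) + m)Δ)`. Dividing by `k` and letting `k → ∞`, compactness
of `Δ` gives `v ∈ (q - 1)Δ`. -/

open Filter Topology

lemma ι2_add (a b : ℤ × ℤ) : ι2 (a + b) = ι2 a + ι2 b := by
  simp [ι2]

lemma ι2_nsmul (k : ℕ) (a : ℤ × ℤ) : ι2 (k • a) = (k : ℝ) • ι2 a := by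
  simp [ι2]

lemma mem_transl {A : Set (ℝ × ℝ)} {p z : ℝ × ℝ} : z ∈ transl A p ↔ z + p ∈ A := by
  simp only [transl, Set.mem_image, sub_eq_iff_eq_add, exists_eq_right]

lemma IsLatticePolygon.convex {Δ : Set (ℝ × ℝ)} (hΔ : IsLatticePolygon Δ) : Convex ℝ Δ := by
  obtain ⟨S, rfl⟩ := hΔ
  exact convex_convexHull ℝ _

lemma IsLatticePolygon.isCompact {Δ : Set (ℝ × ℝ)} (hΔ : IsLatticePolygon Δ) : IsCompact Δ := by
  obtain ⟨S, rfl⟩ := hΔ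
  exact (S.finite_toSet.image ι2).isCompact_convexHull (𝕜 := ℝ)

lemma subset_interiorHull (A : Set (ℝ × ℝ)) : interior A ∩ Set.range ι2 ⊆ interiorHull A :=
  subset_convexHull ℝ _

lemma Convex.interiorHull_subset_interior {A : Set (ℝ × ℝ)} (hA : Convex ℝ A) :
    interiorHull A ⊆ interior A :=
  convexHull_min Set.inter_subset_left hA.interior

theorem Convex.add_mem_interior_add_smul {E : Type*} [AddCommGroup E] [Module ℝ E]
    [TopologicalSpace E] [IsTopologicalAddGroup E] {Δ : Set E} (hΔ : Convex ℝ Δ) {a b : ℝ}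
    (ha : 0 ≤ a) (hb : 0 ≤ b) {u v : E} (hu : u ∈ a • Δ) (hv : v ∈ interior (b • Δ)) :
    u + v ∈ interior ((a + b) • Δ) := by
  rw [hΔ.add_smul ha hb]
  exact subset_interior_add_right (Set.add_mem_add hu hv)

theorem IsCompact.mem_smul_of_forall_natCast_smul_add_mem {E : Type*} [NormedAddCommGroup E]
    [NormedSpace ℝ E] {Δ : Set E} (hΔ : IsCompact Δ) {v w : E} {c m : ℝ}
    (h : ∀ k : ℕ, (k : ℝ) • v + w ∈ ((k : ℝ) * c + m) • Δ) : v ∈ c • Δ := by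
  choose d hdΔ hd using fun k => Set.mem_smul_set.1 (h k)
  obtain ⟨R, hR⟩ := (hΔ.image (f := fun x => m • x - w) (by fun_prop)).isBounded.exists_norm_le
  have hsmall : Tendsto (fun k : ℕ => (k : ℝ)⁻¹ • (m • d k - w)) atTop (𝓝 0) :=
    tendsto_inv_atTop_nhds_zero_nat.zero_smul_isBoundedUnder_le
      (isBoundedUnder_of ⟨R, fun k => hR _ ⟨d k, hdΔ k, rfl⟩⟩)
  have heq : ∀ᶠ k : ℕ in atTop, v - (k : ℝ)⁻¹ • (m • d k - w) = c • d k := by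
    filter_upwards [eventually_ne_atTop 0] with k hk
    have hk : (k : ℝ) ≠ 0 := Nat.cast_ne_zero.2 hk
    rw [eq_comm, ← smul_right_inj hk, smul_sub, smul_inv_smul₀ hk, smul_smul]
    linear_combination (norm := module) hd k
  have hlim : Tendsto (fun k => c • d k) atTop (𝓝 v) := by
    simpa using (tendsto_const_nhds.sub hsmall).congr' heq
  exact (hΔ.smul c).isClosed.mem_of_tendsto hlim
    (Eventually.of_forall fun k => Set.smul_mem_smul_set (hdΔ k))

lemma exists_ι2_mem_interior_natCast_smul {Δ : Set (ℝ × ℝ)} (h : (interior Δ).Nonempty) :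
    ∃ (w : ℤ × ℤ) (m : ℕ), ι2 w ∈ interior ((m : ℝ) • Δ) := by
  obtain ⟨⟨a, b⟩, hab⟩ := (Rat.denseRange_cast.prodMap Rat.denseRange_cast).exists_mem_open
    isOpen_interior h
  have hm : ((a.den * b.den : ℕ) : ℝ) ≠ 0 := by positivity
  refine ⟨(a.num * b.den, b.num * a.den), a.den * b.den, ?_⟩
  rw [interior_smul₀ hm]
  convert Set.smul_mem_smul_set hab using 1
  simp only [ι2, Prod.map, Prod.smul_mk, smul_eq_mul, Rat.cast_def]
  ext <;> push_cast <;> field_simp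

lemma ι2_mem_interior_of_transl_interiorHull_subset {Δ : Set (ℝ × ℝ)} (hΔ : Convex ℝ Δ) {c : ℝ}
    {P Q : ℤ × ℤ}
    (h : transl (interiorHull ((c + 1) • Δ)) (ι2 P) ∩ transl (interiorHull ((c + 1) • Δ)) (ι2 Q) ∩
      Set.range ι2 ⊆ interiorHull (c • Δ))
    {z : ℤ × ℤ} (hzP : ι2 z + ι2 P ∈ interior ((c + 1) • Δ))
    (hzQ : ι2 z + ι2 Q ∈ interior ((c + 1) • Δ)) : ι2 z ∈ interior (c • Δ) := by
  have hlattice {R : ℤ × ℤ} (hR : ι2 z + ι2 R ∈ interior ((c + 1) • Δ)) :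
      ι2 z ∈ transl (interiorHull ((c + 1) • Δ)) (ι2 R) :=
    mem_transl.2 (subset_interiorHull _ ⟨hR, z + R, ι2_add z R⟩)
  exact (hΔ.smul c).interiorHull_subset_interior (h ⟨⟨hlattice hzP, hlattice hzQ⟩, z, rfl⟩)

lemma ι2_nsmul_add_mem_interior {Δ : Set (ℝ × ℝ)} (hΔ : Convex ℝ Δ) {p q : ℝ × ℝ}
    {v w : ℤ × ℤ} {n m : ℕ}
    (step : ∀ (N : ℕ) (z : ℤ × ℤ), ι2 z + p ∈ interior (((N : ℝ) + 1) • Δ) →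
      ι2 z + q ∈ interior (((N : ℝ) + 1) • Δ) → ι2 z ∈ interior ((N : ℝ) • Δ))
    (hp : ι2 v + p ∈ ((n : ℝ) + 1) • Δ) (hq : ι2 v + q ∈ ((n : ℝ) + 1) • Δ)
    (hw : ι2 w ∈ interior ((m : ℝ) • Δ)) (k : ℕ) :
    ι2 (k • v + w) ∈ interior (((k * n + m : ℕ) : ℝ) • Δ) := by
  induction k with
  | zero => simpa using hw
  | succ k ih =>
    have hsplit (r : ℝ × ℝ) : ι2 ((k + 1) • v + w) + r = ι2 v + r + ι2 (k • v + w) := by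
      rw [add_right_comm, ← ι2_add, succ_nsmul', add_assoc]
    have hfactor : (((k + 1) * n + m : ℕ) : ℝ) + 1 = ((n : ℝ) + 1) + ((k * n + m : ℕ) : ℝ) := by
      push_cast; ring
    apply step <;> rw [hfactor, hsplit]
    · exact hΔ.add_mem_interior_add_smul (by positivity) (by positivity) hp ih
    · exact hΔ.add_mem_interior_add_smul (by positivity) (by positivity) hq ih

theorem stmt1_general (Δ : Set (ℝ × ℝ)) (hΔ : IsLatticePolygon Δ) (h2 : (interior Δ).Nonempty)
    (P Q : ℤ × ℤ)
    (hyp : ∀ q : ℕ, 1 ≤ q →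
      transl (interiorHull ((q : ℝ) • Δ)) (ι2 P) ∩ transl (interiorHull ((q : ℝ) • Δ)) (ι2 Q) ∩
          Set.range ι2
        ⊆ interiorHull (((q : ℝ) - 1) • Δ)) :
    ∀ q : ℕ, 1 ≤ q →
      transl ((q : ℝ) • Δ) (ι2 P) ∩ transl ((q : ℝ) • Δ) (ι2 Q) ∩ Set.range ι2
        ⊆ ((q : ℝ) - 1) • Δ := by
  rintro q hq _ ⟨⟨hvP, hvQ⟩, v, rfl⟩
  obtain ⟨n, rfl⟩ := Nat.exists_eq_add_of_le' hq
  obtain ⟨w, m, hw⟩ := exists_ι2_mem_interior_natCast_smul h2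
  have step (N : ℕ) (z : ℤ × ℤ) := ι2_mem_interior_of_transl_interiorHull_subset hΔ.convex
    (z := z) (c := N) (by simpa using hyp (N + 1) (by omega))
  rw [mem_transl] at hvP hvQ
  push_cast at hvP hvQ ⊢
  rw [add_sub_cancel_right]
  refine hΔ.isCompact.mem_smul_of_forall_natCast_smul_add_mem (w := ι2 w) (m := m) fun k => ?_
  simpa only [ι2_add, ι2_nsmul, Nat.cast_add, Nat.cast_mul] using
    interior_subset (ι2_nsmul_add_mem_interior hΔ.convex step hvP hvQ hw k)

/-- if `((qΔ)⁽¹⁾ − P) ∩ ((qΔ)⁽¹⁾ − Q) ∩ ℤ² ⊆ ((q−1)Δ)⁽¹⁾` for all `q ≥ 1`,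
then `(qΔ − P) ∩ (qΔ − Q) ∩ ℤ² ⊆ (q−1)Δ` for all `q ≥ 1`. -/
theorem stmt1 (Δ : Set (ℝ × ℝ)) (hΔ : IsLatticePolygon Δ) (h2 : (interior Δ).Nonempty)
    (P Q : ℤ × ℤ) (hP : ι2 P ∈ Δ) (hQ : ι2 Q ∈ Δ) (hPQ : P ≠ Q)
    (hyp : ∀ q : ℕ, 1 ≤ q →
      transl (interiorHull ((q : ℝ) • Δ)) (ι2 P) ∩ transl (interiorHull ((q : ℝ) • Δ)) (ι2 Q) ∩
          Set.range ι2
        ⊆ interiorHull (((q : ℝ) - 1) • Δ)) :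
    ∀ q : ℕ, 1 ≤ q →
      transl ((q : ℝ) • Δ) (ι2 P) ∩ transl ((q : ℝ) • Δ) (ι2 Q) ∩ Set.range ι2
        ⊆ ((q : ℝ) - 1) • Δ :=
  stmt1_general Δ hΔ h2 P Q hyp
end
end

section
/- Let Δ be a two-dimensional lattice polygon with lattice width lw(Δ) = d. Suppose that for every extreme point P of Δ one has lw(conv((Δ ∩ ℤ²) \ {P})) < d. Then there exist a matrix A ∈ GL₂(ℤ) (an integer 2×2 matrix with determinant ±1) and a vector b ∈ ℤ² such that the image of Δ under the affine map x ↦ Ax + b is contained in the square [0,d] × [0,d]. -/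
open scoped Pointwise

noncomputable section

/-- The lattice width of a polygon: the infimum over all nonzero integral linear forms
of the width `max_{x∈Δ} f(x) − min_{x∈Δ} f(x)`. -/
def latticeWidth (Δ : Set (ℝ × ℝ)) : ℝ :=
  sInf { w : ℝ | ∃ a b : ℤ, ¬(a = 0 ∧ b = 0) ∧
    w = sSup ((fun x : ℝ × ℝ => (a : ℝ) * x.1 + (b : ℝ) * x.2) '' Δ) -
        sInf ((fun x : ℝ × ℝ => (a : ℝ) * x.1 + (b : ℝ) * x.2) '' Δ) }

/-!
Let `F` be the lattice points of `Δ` and `φ` an integral form of minimal width `d` on `F`; by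
minimality `φ` is primitive, so it is part of a unimodular pair `(ψ, φ)`. Let `t` and `b` be
points of `F` where `φ` is maximal and minimal, and `P` a vertex of `Δ` other than `t` and `b`:
some nonzero form `g` has width `< d` on `F \ {P}`. Writing `g = a ψ + c φ`, we get `a ≠ 0`
because `t, b ∈ F \ {P}`, and choosing `m` with `|c - a m| ≤ |a| / 2` shows that
`f = ψ + m φ` also has width `< d` on `F \ {P}`. If `f` had width `> d` on `F`, then `P` would
be the unique maximum (or minimum) of `f` on `F`, by a margin of at least `2`. But the segment
from `P` to the point of `[b, t]` on the same level of `φ` contains the lattice point `P - v`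
(or `P + v`), where `v ∈ ker φ` and `ψ v = 1`, and there `f` changes by only `1`. So `f` and
`φ` both have width at most `d` on `Δ`, and `x ↦ (f x, φ x)`, suitably translated, maps `Δ`
into `[0, d]²`.
-/

lemma ι2_injective : Function.Injective ι2 := fun p q h => by
  simp only [ι2, Prod.mk.injEq, Int.cast_inj] at h
  exact Prod.ext h.1 h.2

lemma ι2_sub (p q : ℤ × ℤ) : ι2 (p - q) = ι2 p - ι2 q := by
  simp [ι2]

lemma isClosedEmbedding_ι2 : Topology.IsClosedEmbedding ι2 :=
  Int.isClosedEmbedding_coe_real.prodMap Int.isClosedEmbedding_coe_real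

namespace LatticePolygon

def ev (g P : ℤ × ℤ) : ℤ := g.1 * P.1 + g.2 * P.2

@[simp] lemma ev_add (g h P : ℤ × ℤ) : ev (g + h) P = ev g P + ev h P := by
  simp only [ev, Prod.fst_add, Prod.snd_add]; ring

@[simp] lemma ev_smul (k : ℤ) (g P : ℤ × ℤ) : ev (k • g) P = k * ev g P := by
  simp only [ev, Prod.smul_fst, Prod.smul_snd, smul_eq_mul]; ring

@[simp] lemma ev_neg (g P : ℤ × ℤ) : ev (-g) P = -ev g P := by
  simp only [ev, Prod.fst_neg, Prod.snd_neg]; ring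

@[simp] lemma ev_sub (g P Q : ℤ × ℤ) : ev g (P - Q) = ev g P - ev g Q := by
  simp only [ev, Prod.fst_sub, Prod.snd_sub]; ring

def linForm (g : ℤ × ℤ) : ℝ × ℝ →ₗ[ℝ] ℝ where
  toFun x := (g.1 : ℝ) * x.1 + (g.2 : ℝ) * x.2
  map_add' x y := by simp only [Prod.fst_add, Prod.snd_add]; ring
  map_smul' c x := by simp only [Prod.smul_fst, Prod.smul_snd, smul_eq_mul, RingHom.id_apply]; ring

@[simp] lemma linForm_ι2 (g P : ℤ × ℤ) : linForm g (ι2 P) = ev g P := by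
  simp [linForm, ι2, ev]

def formMax (g : ℤ × ℤ) (G : Finset (ℤ × ℤ)) : ℤ := ((G.image (ev g)).max).unbotD 0

def formMin (g : ℤ × ℤ) (G : Finset (ℤ × ℤ)) : ℤ := ((G.image (ev g)).min).untopD 0

def formWidth (g : ℤ × ℤ) (G : Finset (ℤ × ℤ)) : ℤ := formMax g G - formMin g G

variable {g φ ψ : ℤ × ℤ} {F G : Finset (ℤ × ℤ)} {P Q : ℤ × ℤ}

lemma formMax_eq_max' (hG : G.Nonempty) : formMax g G = (G.image (ev g)).max' (hG.image _) := by
  rw [formMax, ← Finset.coe_max' (hG.image (ev g)), WithBot.unbotD_coe]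

lemma formMin_eq_min' (hG : G.Nonempty) : formMin g G = (G.image (ev g)).min' (hG.image _) := by
  rw [formMin, ← Finset.coe_min' (hG.image (ev g)), WithTop.untopD_coe]

lemma le_formMax (hP : P ∈ G) : ev g P ≤ formMax g G := by
  rw [formMax_eq_max' ⟨P, hP⟩]
  exact Finset.le_max' _ _ (Finset.mem_image_of_mem _ hP)

lemma formMin_le (hP : P ∈ G) : formMin g G ≤ ev g P := by
  rw [formMin_eq_min' ⟨P, hP⟩]
  exact Finset.min'_le _ _ (Finset.mem_image_of_mem _ hP)

lemma formMin_le_formMax (hG : G.Nonempty) : formMin g G ≤ formMax g G :=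
  have ⟨_, hP⟩ := hG
  (formMin_le hP).trans (le_formMax hP)

lemma exists_ev_eq_formMax (hG : G.Nonempty) : ∃ P ∈ G, ev g P = formMax g G := by
  simpa [formMax_eq_max' hG] using Finset.max'_mem (G.image (ev g)) (hG.image _)

lemma exists_ev_eq_formMin (hG : G.Nonempty) : ∃ P ∈ G, ev g P = formMin g G := by
  simpa [formMin_eq_min' hG] using Finset.min'_mem (G.image (ev g)) (hG.image _)

lemma sub_le_formWidth (hP : P ∈ G) (hQ : Q ∈ G) : ev g P - ev g Q ≤ formWidth g G := by
  have := le_formMax (g := g) hP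
  have := formMin_le (g := g) hQ
  rw [formWidth]; omega

lemma formWidth_le (hG : G.Nonempty) {k : ℤ} (h : ∀ P ∈ G, ∀ Q ∈ G, ev g P - ev g Q ≤ k) :
    formWidth g G ≤ k := by
  obtain ⟨P, hP, hPmax⟩ := exists_ev_eq_formMax (g := g) hG
  obtain ⟨Q, hQ, hQmin⟩ := exists_ev_eq_formMin (g := g) hG
  rw [formWidth, ← hPmax, ← hQmin]
  exact h P hP Q hQ

variable (g G) in
lemma formWidth_nonneg : 0 ≤ formWidth g G := by
  obtain rfl | ⟨P, hP⟩ := G.eq_empty_or_nonempty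
  · simp [formWidth, formMax, formMin]
  · simpa using sub_le_formWidth (g := g) hP hP

variable (g G) in
lemma formWidth_smul (k : ℤ) :
    formWidth (k • g) G = |k| * formWidth g G := by
  obtain rfl | hG := G.eq_empty_or_nonempty
  · simp [formWidth, formMax, formMin]
  obtain ⟨P, hP, hPmax⟩ := exists_ev_eq_formMax (g := g) hG
  obtain ⟨Q, hQ, hQmin⟩ := exists_ev_eq_formMin (g := g) hG
  have hPQ : formWidth g G = ev g P - ev g Q := by rw [formWidth, hPmax, hQmin]
  refine le_antisymm (formWidth_le hG fun P' hP' Q' hQ' => ?_) ?_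
  · have h₁ := sub_le_formWidth (g := g) hP' hQ'
    have h₂ := sub_le_formWidth (g := g) hQ' hP'
    rw [ev_smul, ev_smul]
    rcases abs_cases k with ⟨hk, hk₀⟩ | ⟨hk, hk₀⟩ <;> rw [hk] <;> nlinarith
  · have h₁ := sub_le_formWidth (g := k • g) hP hQ
    have h₂ := sub_le_formWidth (g := k • g) hQ hP
    rw [ev_smul, ev_smul] at h₁ h₂
    rcases abs_cases k with ⟨hk, -⟩ | ⟨hk, -⟩ <;> rw [hk, hPQ] <;> linarith

lemma image_linForm_convexHull (hG : G.Nonempty) :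
    linForm g '' convexHull ℝ (ι2 '' G) = Set.Icc (formMin g G : ℝ) (formMax g G) := by
  rw [LinearMap.image_convexHull, ← Set.image_comp]
  apply subset_antisymm
  · refine convexHull_min ?_ (convex_Icc _ _)
    rintro _ ⟨P, hP, rfl⟩
    simp only [Function.comp_apply, linForm_ι2, Set.mem_Icc, Int.cast_le]
    exact ⟨formMin_le hP, le_formMax hP⟩
  · obtain ⟨P, hP, hPmax⟩ := exists_ev_eq_formMax (g := g) hG
    obtain ⟨Q, hQ, hQmin⟩ := exists_ev_eq_formMin (g := g) hG
    rw [← segment_eq_Icc (by exact_mod_cast formMin_le_formMax hG)]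
    refine segment_subset_convexHull ⟨Q, hQ, ?_⟩ ⟨P, hP, ?_⟩ <;> simp [*]

variable (g G) in
lemma sSup_sub_sInf_image_linForm :
    sSup (linForm g '' convexHull ℝ (ι2 '' G)) - sInf (linForm g '' convexHull ℝ (ι2 '' G))
      = formWidth g G := by
  obtain rfl | hG := G.eq_empty_or_nonempty
  · simp [formWidth, formMax, formMin]
  have hle : (formMin g G : ℝ) ≤ formMax g G := by exact_mod_cast formMin_le_formMax hG
  rw [image_linForm_convexHull hG, csSup_Icc hle, csInf_Icc hle, formWidth, Int.cast_sub]

variable (G) in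
lemma exists_forall_formWidth_le :
    ∃ g ≠ 0, ∀ g' ≠ 0, formWidth g G ≤ formWidth g' G := by
  obtain ⟨n, ⟨g, hg, rfl⟩, hn⟩ := Int.exists_least_of_bdd
    (P := fun n => ∃ g ≠ 0, formWidth g G = n) ⟨0, fun _ ⟨g, _, hg⟩ => hg ▸ formWidth_nonneg g G⟩
    ⟨_, (1, 0), by simp, rfl⟩
  exact ⟨g, hg, fun g' hg' => hn _ ⟨g', hg', rfl⟩⟩

variable (G) in
lemma exists_latticeWidth_convexHull_eq :
    ∃ g ≠ 0, latticeWidth (convexHull ℝ (ι2 '' G)) = formWidth g G ∧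
      ∀ g' ≠ 0, formWidth g G ≤ formWidth g' G := by
  obtain ⟨g, hg, hmin⟩ := exists_forall_formWidth_le G
  refine ⟨g, hg, IsLeast.csInf_eq ⟨⟨g.1, g.2, ?_, ?_⟩, ?_⟩, hmin⟩
  · simpa [Prod.ext_iff] using hg
  · exact (sSup_sub_sInf_image_linForm g G).symm
  · rintro _ ⟨a, b, hab, rfl⟩
    rw [← not_congr Prod.mk_eq_zero] at hab
    exact (sSup_sub_sInf_image_linForm (a, b) G).symm ▸ (by exact_mod_cast hmin _ hab)

def IsSaturated (F : Finset (ℤ × ℤ)) : Prop :=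
  convexHull ℝ (ι2 '' F) ∩ Set.range ι2 = ι2 '' F

lemma IsSaturated.mem (hF : IsSaturated F) {X : ℤ × ℤ}
    (hX : ι2 X ∈ convexHull ℝ (ι2 '' F)) : X ∈ F := by
  obtain ⟨Y, hY, hYX⟩ := hF.le ⟨hX, X, rfl⟩
  rwa [← ι2_injective hYX]

lemma _root_.IsLatticePolygon.exists_isSaturated {Δ : Set (ℝ × ℝ)} (hΔ : IsLatticePolygon Δ) :
    ∃ F, IsSaturated F ∧ Δ = convexHull ℝ (ι2 '' F) := by
  obtain ⟨S, rfl⟩ := hΔ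
  have hfin : (ι2 ⁻¹' convexHull ℝ (ι2 '' S)).Finite :=
    (isClosedEmbedding_ι2.isCompact_preimage
      ((S.finite_toSet.image ι2).isCompact_convexHull ℝ)).finite_of_discrete
  have hF : ι2 '' hfin.toFinset = convexHull ℝ (ι2 '' S) ∩ Set.range ι2 := by
    rw [Set.Finite.coe_toFinset, Set.image_preimage_eq_inter_range]
  have hS : ι2 '' S ⊆ ι2 '' hfin.toFinset :=
    hF ▸ Set.subset_inter (subset_convexHull ℝ _) (Set.image_subset_range _ _)
  have hΔ : convexHull ℝ (ι2 '' S) = convexHull ℝ (ι2 '' hfin.toFinset) :=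
    le_antisymm (convexHull_mono hS)
      (convexHull_min (hF ▸ Set.inter_subset_left) (convex_convexHull ℝ _))
  exact ⟨hfin.toFinset, by rw [IsSaturated, ← hΔ, hF], hΔ⟩

lemma one_le_formWidth (hg : g ≠ 0)
    (hG : (interior (convexHull ℝ (ι2 '' G))).Nonempty) : 1 ≤ formWidth g G := by
  by_contra! hlt
  have hconst : formMax g G = formMin g G := by
    have := formWidth_nonneg g G; rw [formWidth] at this hlt; omega
  have hsurj : Function.Surjective (linForm g) := by
    refine (LinearMap.surjective_or_eq_zero (linForm g)).resolve_right fun h => hg ?_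
    have h₁ : g.1 = 0 := by simpa [linForm] using LinearMap.congr_fun h (1, 0)
    have h₂ : g.2 = 0 := by simpa [linForm] using LinearMap.congr_fun h (0, 1)
    exact Prod.ext h₁ h₂
  have hGne : G.Nonempty := by simpa using hG.mono interior_subset
  have hopen := (linForm g).isOpenMap_of_finiteDimensional hsurj _
    (isOpen_interior (s := convexHull ℝ (ι2 '' G)))
  have hsub : linForm g '' interior (convexHull ℝ (ι2 '' G)) ⊆ {(formMin g G : ℝ)} := by
    refine (Set.image_mono interior_subset).trans ?_
    rw [image_linForm_convexHull hGne, hconst, Set.Icc_self]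
  rw [(Set.subset_singleton_iff_eq.1 hsub).resolve_left (hG.image _).ne_empty] at hopen
  exact not_isOpen_singleton _ hopen

lemma affineSpan_pair_ne_top (x y : ℝ × ℝ) : affineSpan ℝ {x, y} ≠ ⊤ := by
  intro h
  have hdir := congrArg AffineSubspace.direction h
  rw [direction_affineSpan, AffineSubspace.direction_top, vectorSpan_pair] at hdir
  have := finrank_span_le_card (R := ℝ) ({x -ᵥ y} : Set (ℝ × ℝ))
  rw [hdir, finrank_top, Module.finrank_prod, Module.finrank_self] at this
  simp at this

lemma exists_mem_extremePoints_ne {Δ : Set (ℝ × ℝ)} (hcomp : IsCompact Δ) (hconv : Convex ℝ Δ)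
    (hint : (interior Δ).Nonempty) (x y : ℝ × ℝ) :
    ∃ P ∈ Δ.extremePoints ℝ, P ≠ x ∧ P ≠ y := by
  by_contra! h
  have hsub : Δ ⊆ convexHull ℝ {x, y} := by
    rw [← closure_convexHull_extremePoints hcomp hconv]
    refine closure_minimal (convexHull_mono fun P hP => ?_)
      ((Set.toFinite {x, y}).isCompact_convexHull ℝ).isClosed
    by_cases hPx : P = x
    · exact Or.inl hPx
    · exact Or.inr (h P hP hPx)
  exact affineSpan_pair_ne_top x y
    (interior_convexHull_nonempty_iff_affineSpan_eq_top.1 (hint.mono (interior_mono hsub)))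

lemma exists_eq_mul_add_two_mul_abs_le (c : ℤ) {a : ℤ} (ha : a ≠ 0) :
    ∃ m r : ℤ, c = a * m + r ∧ 2 * |r| ≤ |a| := by
  have hpos : 0 < a.natAbs := Int.natAbs_pos.2 ha
  refine ⟨a.sign * Int.bdiv c a.natAbs, Int.bmod c a.natAbs, ?_, ?_⟩
  · rw [← mul_assoc, Int.mul_sign_self]
    exact (Int.bdiv_add_bmod c a.natAbs).symm
  · have h₁ := Int.le_bmod (x := c) hpos
    have h₂ := Int.bmod_lt (x := c) hpos
    rw [← Int.natCast_natAbs a]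
    rcases abs_cases (Int.bmod c a.natAbs) with ⟨h, -⟩ | ⟨h, -⟩ <;> omega

-- `(φ.2, -φ.1)` and `(-ψ.2, ψ.1)` form the basis of `ℤ²` dual to `(ψ, φ)`.
variable (g) in
lemma eq_smul_add_smul (hdet : ψ.1 * φ.2 - ψ.2 * φ.1 = 1) :
    g = ev g (φ.2, -φ.1) • ψ + ev g (-ψ.2, ψ.1) • φ := by
  ext <;> simp only [ev, Prod.fst_add, Prod.snd_add, Prod.smul_fst, Prod.smul_snd, smul_eq_mul]
  · linear_combination -g.1 * hdet
  · linear_combination -g.2 * hdet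

lemma eq_smul_of_linForm_eq_zero (hdet : ψ.1 * φ.2 - ψ.2 * φ.1 = 1) {z : ℝ × ℝ}
    (hz : linForm φ z = 0) : z = linForm ψ z • ι2 (φ.2, -φ.1) := by
  have hdetR : (ψ.1 : ℝ) * φ.2 - ψ.2 * φ.1 = 1 := by exact_mod_cast hdet
  simp only [linForm, LinearMap.coe_mk, AddHom.coe_mk] at hz ⊢
  ext <;> simp only [ι2, Prod.smul_fst, Prod.smul_snd, smul_eq_mul, Int.cast_neg]
  · linear_combination -z.1 * hdetR - ψ.2 * hz
  · linear_combination -z.2 * hdetR + ψ.1 * hz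

lemma exists_formWidth_add_smul_lt (hdet : ψ.1 * φ.2 - ψ.2 * φ.1 = 1) (hg : g ≠ 0)
    (hgG : formWidth g G < formWidth φ G) :
    ∃ m : ℤ, formWidth (ψ + m • φ) G < formWidth φ G := by
  obtain rfl | hG := G.eq_empty_or_nonempty
  · simp [formWidth, formMax, formMin] at hgG
  have hgac := eq_smul_add_smul g hdet
  set a := ev g (φ.2, -φ.1)
  set c := ev g (-ψ.2, ψ.1)
  rcases eq_or_ne a 0 with ha | ha
  · rw [ha, zero_smul, zero_add] at hgac
    have hc : c ≠ 0 := by rintro hc; rw [hc, zero_smul] at hgac; exact hg hgac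
    rw [hgac, formWidth_smul] at hgG
    nlinarith [Int.one_le_abs hc, formWidth_nonneg φ G]
  obtain ⟨m, r, hcm, hr⟩ := exists_eq_mul_add_two_mul_abs_le c ha
  refine ⟨m, Int.lt_of_le_sub_one (formWidth_le hG fun P hP Q hQ => ?_)⟩
  set x := ev (ψ + m • φ) P - ev (ψ + m • φ) Q
  have hx : a * x = (ev g P - ev g Q) - r * (ev φ P - ev φ Q) := by
    rw [hgac]; simp only [x, ev_add, ev_smul, hcm]; ring
  have hgPQ : |ev g P - ev g Q| ≤ formWidth φ G - 1 :=
    abs_sub_le_iff.2 ⟨by linarith [sub_le_formWidth (g := g) hP hQ],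
      by linarith [sub_le_formWidth (g := g) hQ hP]⟩
  have hφPQ : |r * (ev φ P - ev φ Q)| ≤ |r| * formWidth φ G := by
    rw [abs_mul]
    exact mul_le_mul_of_nonneg_left (abs_sub_le_iff.2
      ⟨sub_le_formWidth hP hQ, sub_le_formWidth hQ hP⟩) (abs_nonneg r)
  have hax : |a| * x ≤ formWidth φ G - 1 + |r| * formWidth φ G := by
    calc |a| * x ≤ |a * x| := by
          rw [abs_mul]; exact mul_le_mul_of_nonneg_left (le_abs_self x) (abs_nonneg a)
      _ ≤ |ev g P - ev g Q| + |r * (ev φ P - ev φ Q)| := hx ▸ abs_sub _ _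
      _ ≤ _ := add_le_add hgPQ hφPQ
  have hra : 0 ≤ |a| - |r| - 1 := by have := Int.one_le_abs ha; omega
  by_contra! hxw
  nlinarith [mul_le_mul_of_nonneg_left (Int.le_of_sub_one_lt hxw) (abs_nonneg a),
    mul_nonneg hra (formWidth_nonneg φ G)]

lemma IsSaturated.sub_mem (hF : IsSaturated F) (hdet : ψ.1 * φ.2 - ψ.2 * φ.1 = 1)
    {t b : ℤ × ℤ} (hP : P ∈ F) (ht : t ∈ F) (hb : b ∈ F)
    (hφb : ev φ b ≤ ev φ P) (hφt : ev φ P ≤ ev φ t)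
    (hψt : ev ψ t < ev ψ P) (hψb : ev ψ b < ev ψ P) : P - (φ.2, -φ.1) ∈ F := by
  have hmem : ∀ {X}, X ∈ F → ι2 X ∈ convexHull ℝ (ι2 '' F) :=
    fun hX => subset_convexHull ℝ _ ⟨_, hX, rfl⟩
  obtain ⟨W, hW, hφW⟩ : ∃ W ∈ segment ℝ (ι2 b) (ι2 t), linForm φ W = ev φ P := by
    have : (ev φ P : ℝ) ∈ (linForm φ).toAffineMap '' segment ℝ (ι2 b) (ι2 t) := by
      rw [image_segment, LinearMap.coe_toAffineMap, linForm_ι2, linForm_ι2,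
        segment_eq_Icc (by exact_mod_cast hφb.trans hφt)]
      exact ⟨by exact_mod_cast hφb, by exact_mod_cast hφt⟩
    simpa using this
  have hWF : W ∈ convexHull ℝ (ι2 '' F) :=
    (convex_convexHull ℝ _).segment_subset (hmem hb) (hmem ht) hW
  have hψW : linForm ψ W ≤ ev ψ P - 1 := by
    refine (convex_halfSpace_le (linForm ψ).isLinear _).segment_subset ?_ ?_ hW <;>
      simp only [Set.mem_ofPred_eq, linForm_ι2] <;> exact_mod_cast Int.le_sub_one_of_lt ‹_›
  set lam := linForm ψ (W - ι2 P)
  have hlam : lam ≤ -1 := by simp only [lam, map_sub, linForm_ι2]; linarith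
  have hdir : W - ι2 P = lam • ι2 (φ.2, -φ.1) :=
    eq_smul_of_linForm_eq_zero hdet (by simp [map_sub, hφW])
  have hX : ι2 (P - (φ.2, -φ.1)) = ι2 P + (-lam)⁻¹ • (W - ι2 P) := by
    rw [hdir, smul_smul, inv_neg, neg_mul, inv_mul_cancel₀ (by linarith), ι2_sub]
    simp [sub_eq_add_neg]
  apply hF.mem
  rw [hX]
  exact (convex_convexHull ℝ _).add_smul_sub_mem (hmem hP) hWF
    ⟨inv_nonneg.2 (by linarith), inv_le_one_of_one_le₀ (by linarith)⟩

lemma IsSaturated.exists_mem_erase_sub_one_le (hF : IsSaturated F)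
    (hdet : ψ.1 * φ.2 - ψ.2 * φ.1 = 1) {t b : ℤ × ℤ} (hP : P ∈ F) (ht : t ∈ F) (hb : b ∈ F)
    (hφb : ev φ b ≤ ev φ P) (hφt : ev φ P ≤ ev φ t) (htP : t ≠ P) (hbP : b ≠ P) :
    ∃ Q ∈ F.erase P, ev ψ P - 1 ≤ ev ψ Q := by
  by_contra! h
  have hX := hF.sub_mem hdet hP ht hb hφb hφt
    (by linarith [h t (Finset.mem_erase.2 ⟨htP, ht⟩)])
    (by linarith [h b (Finset.mem_erase.2 ⟨hbP, hb⟩)])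
  have hev : ev ψ (P - (φ.2, -φ.1)) = ev ψ P - 1 := by
    rw [ev_sub]; simp only [ev]; linarith
  have hne : P - (φ.2, -φ.1) ≠ P := fun h' => by rw [h'] at hev; omega
  linarith [h _ (Finset.mem_erase.2 ⟨hne, hX⟩)]

theorem IsSaturated.exists_formWidth_add_smul_le (hF : IsSaturated F)
    (hdet : ψ.1 * φ.2 - ψ.2 * φ.1 = 1) {t b : ℤ × ℤ} (hP : P ∈ F) (ht : t ∈ F) (hb : b ∈ F)
    (htP : t ≠ P) (hbP : b ≠ P) (htmax : ev φ t = formMax φ F) (hbmin : ev φ b = formMin φ F)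
    (hg : g ≠ 0) (hgP : formWidth g (F.erase P) < formWidth φ F) :
    ∃ m : ℤ, formWidth (ψ + m • φ) F ≤ formWidth φ F := by
  have ht' : t ∈ F.erase P := Finset.mem_erase.2 ⟨htP, ht⟩
  have hb' : b ∈ F.erase P := Finset.mem_erase.2 ⟨hbP, hb⟩
  have hφb : ev φ b ≤ ev φ P := hbmin ▸ formMin_le hP
  have hφt : ev φ P ≤ ev φ t := htmax ▸ le_formMax hP
  have hw : formWidth φ (F.erase P) = formWidth φ F :=
    le_antisymm (formWidth_le ⟨t, ht'⟩ fun X hX Y hY =>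
        sub_le_formWidth (Finset.mem_of_mem_erase hX) (Finset.mem_of_mem_erase hY))
      (by rw [formWidth, ← htmax, ← hbmin]; exact sub_le_formWidth ht' hb')
  obtain ⟨m, hm⟩ := exists_formWidth_add_smul_lt hdet hg (hw ▸ hgP)
  rw [hw] at hm
  set f := ψ + m • φ
  have hdet' : f.1 * φ.2 - f.2 * φ.1 = 1 := by
    simp only [f, Prod.fst_add, Prod.snd_add, Prod.smul_fst, Prod.smul_snd, smul_eq_mul]
    linear_combination hdet
  obtain ⟨Q₁, hQ₁, h₁⟩ := hF.exists_mem_erase_sub_one_le hdet' hP ht hb hφb hφt htP hbP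
  obtain ⟨Q₂, hQ₂, h₂⟩ := hF.exists_mem_erase_sub_one_le (ψ := -f) (φ := -φ)
    (by simp only [Prod.fst_neg, Prod.snd_neg, neg_mul_neg]; exact hdet')
    hP hb ht (by simpa using hφt) (by simpa using hφb) hbP htP
  rw [ev_neg, ev_neg] at h₂
  have herase : ∀ X ∈ F.erase P, ∀ Y ∈ F.erase P, ev f X - ev f Y ≤ formWidth φ F - 1 :=
    fun X hX Y hY => by linarith [sub_le_formWidth (g := f) hX hY]
  refine ⟨m, formWidth_le ⟨P, hP⟩ fun X hX Y hY => ?_⟩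
  rcases eq_or_ne X P with rfl | hXP <;> rcases eq_or_ne Y X with rfl | hYX
  · simpa using formWidth_nonneg φ F
  · linarith [herase Q₁ hQ₁ Y (Finset.mem_erase.2 ⟨hYX, hY⟩)]
  · simpa using formWidth_nonneg φ F
  have hX' := Finset.mem_erase.2 ⟨hXP, hX⟩
  rcases eq_or_ne Y P with rfl | hYP
  · linarith [herase X hX' Q₂ hQ₂]
  · linarith [herase X hX' Y (Finset.mem_erase.2 ⟨hYP, hY⟩)]

lemma isCoprime_of_forall_formWidth_le (hφ : φ ≠ 0) (hw : 0 < formWidth φ F)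
    (hmin : ∀ g ≠ 0, formWidth φ F ≤ formWidth g F) : IsCoprime φ.1 φ.2 := by
  rw [Int.isCoprime_iff_gcd_eq_one]
  obtain ⟨a, ha⟩ := Int.gcd_dvd_left φ.1 φ.2
  obtain ⟨b, hb⟩ := Int.gcd_dvd_right φ.1 φ.2
  have hφab : φ = (Int.gcd φ.1 φ.2 : ℤ) • (a, b) := Prod.ext ha hb
  have hab : (a, b) ≠ 0 := by
    rintro h
    rw [h, smul_zero] at hφab
    exact hφ hφab
  have := hmin _ hab
  rw [hφab, formWidth_smul, abs_of_nonneg (by positivity)] at hw this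
  have : (Int.gcd φ.1 φ.2 : ℤ) = 1 := by nlinarith [formWidth_nonneg (a, b) F]
  exact_mod_cast this

theorem IsSaturated.exists_formWidth_le (hF : IsSaturated F)
    (hint : (interior (convexHull ℝ (ι2 '' F))).Nonempty) (hφ : φ ≠ 0)
    (hmin : ∀ g ≠ 0, formWidth φ F ≤ formWidth g F)
    (hdrop : ∀ P ∈ F, ι2 P ∈ (convexHull ℝ (ι2 '' F)).extremePoints ℝ →
      ∃ g ≠ 0, formWidth g (F.erase P) < formWidth φ F) :
    ∃ ψ : ℤ × ℤ, ψ.1 * φ.2 - ψ.2 * φ.1 = 1 ∧ formWidth ψ F ≤ formWidth φ F := by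
  have hw := one_le_formWidth hφ hint
  have hFne : F.Nonempty := by simpa using hint.mono interior_subset
  obtain ⟨u, v, huv⟩ := isCoprime_of_forall_formWidth_le hφ (by omega) hmin
  have hdet : v * φ.2 - (-u) * φ.1 = 1 := by linear_combination huv
  obtain ⟨t, ht, htmax⟩ := exists_ev_eq_formMax (g := φ) hFne
  obtain ⟨b, hb, hbmin⟩ := exists_ev_eq_formMin (g := φ) hFne
  obtain ⟨_, hPext, htP, hbP⟩ := exists_mem_extremePoints_ne
    ((F.finite_toSet.image ι2).isCompact_convexHull ℝ) (convex_convexHull ℝ _) hint (ι2 t) (ι2 b)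
  obtain ⟨P, hP, rfl⟩ := extremePoints_convexHull_subset hPext
  obtain ⟨g, hg, hgP⟩ := hdrop P hP hPext
  obtain ⟨m, hm⟩ := hF.exists_formWidth_add_smul_le (ψ := (v, -u)) hdet hP ht hb
    (by rintro rfl; exact htP rfl) (by rintro rfl; exact hbP rfl) htmax hbmin hg hgP
  refine ⟨(v, -u) + m • φ, ?_, hm⟩
  simp only [Prod.fst_add, Prod.snd_add, Prod.smul_fst, Prod.smul_snd, smul_eq_mul]
  linear_combination hdet

variable (g) in
lemma sub_formMin_mem_Icc {x : ℝ × ℝ}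
    (hx : x ∈ convexHull ℝ (ι2 '' G)) :
    linForm g x - formMin g G ∈ Set.Icc (0 : ℝ) (formWidth g G) := by
  have hG : G.Nonempty := Finset.coe_nonempty.1 (convexHull_nonempty_iff.1 ⟨x, hx⟩).of_image
  have := image_linForm_convexHull (g := g) hG ▸ Set.mem_image_of_mem (linForm g) hx
  simp only [Set.mem_Icc, formWidth, Int.cast_sub] at this ⊢
  constructor <;> linarith [this.1, this.2]

end LatticePolygon

open LatticePolygon in
/-- if removing any extreme point of `Δ` decreases the lattice width
`d = lw(Δ)`, then some unimodular affine transformation maps `Δ` into `[0,d] × [0,d]`. -/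
theorem stmt8 (Δ : Set (ℝ × ℝ)) (hΔ : IsLatticePolygon Δ) (h2 : (interior Δ).Nonempty)
    (d : ℝ) (hd : latticeWidth Δ = d)
    (hmin : ∀ P ∈ Set.extremePoints ℝ Δ,
      latticeWidth (convexHull ℝ ((Δ ∩ Set.range ι2) \ {P})) < d) :
    ∃ (A : Matrix (Fin 2) (Fin 2) ℤ) (b : ℤ × ℤ),
      (A.det = 1 ∨ A.det = -1) ∧
      (fun x : ℝ × ℝ =>
          (((A 0 0 : ℤ) : ℝ) * x.1 + ((A 0 1 : ℤ) : ℝ) * x.2 + ((b.1 : ℤ) : ℝ),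
           ((A 1 0 : ℤ) : ℝ) * x.1 + ((A 1 1 : ℤ) : ℝ) * x.2 + ((b.2 : ℤ) : ℝ))) '' Δ
        ⊆ Set.Icc (0 : ℝ) d ×ˢ Set.Icc (0 : ℝ) d := by
  obtain ⟨F, hF, rfl⟩ := hΔ.exists_isSaturated
  obtain ⟨φ, hφ, hwφ, hφmin⟩ := exists_latticeWidth_convexHull_eq F
  subst hd
  obtain ⟨ψ, hdet, hψ⟩ := hF.exists_formWidth_le h2 hφ hφmin fun P _ hP => by
    obtain ⟨g, hg, hgw, -⟩ := exists_latticeWidth_convexHull_eq (F.erase P)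
    have hlattice : ι2 '' F \ {ι2 P} = ι2 '' (F.erase P) := by
      rw [Finset.coe_erase, Set.image_sdiff ι2_injective, Set.image_singleton]
    have hlt := hmin _ hP
    rw [hF, hlattice, hgw, hwφ, Int.cast_lt] at hlt
    exact ⟨g, hg, hlt⟩
  refine ⟨!![ψ.1, ψ.2; φ.1, φ.2], (-formMin ψ F, -formMin φ F), Or.inl ?_, ?_⟩
  · rw [Matrix.det_fin_two_of]; exact hdet
  rintro _ ⟨x, hx, rfl⟩
  have hψx := sub_formMin_mem_Icc ψ hx
  have hφx := sub_formMin_mem_Icc φ hx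
  have hψφ : (formWidth ψ F : ℝ) ≤ formWidth φ F := by exact_mod_cast hψ
  simp only [linForm, LinearMap.coe_mk, AddHom.coe_mk, Set.mem_Icc] at hψx hφx
  simp only [Matrix.of_apply, Matrix.cons_val', Matrix.cons_val_zero, Matrix.cons_val_one,
    Matrix.empty_val', Matrix.cons_val_fin_one, Int.cast_neg, Set.mem_prod, Set.mem_Icc, hwφ]
  refine ⟨⟨?_, ?_⟩, ?_, ?_⟩ <;> linarith

end
end
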